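/- Let (X, φ) be a size pair with at most finitely many homological 0-critical values, and let w be a homological 0-critical value. If ι_0^{w−ε, w+ε} is surjective for every sufficiently small ε > 0, then there exists u < w such that w is a discontinuity point of the function v ↦ ℓ_{(X,φ)}(u, v). -/

import Mathlib

universe u v

/-- An abstract packaging of (degree-0) Čech homology with coefficients in a field `K`,
applied to the subspaces of a topological space `X`: absolute groups `Ȟ₀(S)`, relative
groups `Ȟ₀(T, S)`, inclusion-induced homomorphisms, together with the standard
properties of Čech homology on compact Hausdorff pairs with field coefficients
(rank `Ȟ₀` = number of connected components, functoriality, exactness of the final part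
of the homology sequence of a pair). -/
structure CechTheory (X : Type u) [TopologicalSpace X] (K : Type v) [Field K] where
  /-- the 0-th Čech homology group of a subspace -/
  H0 : Set X → Type v
  [h0Add : ∀ S : Set X, AddCommGroup (H0 S)]
  [h0Mod : ∀ S : Set X, Module K (H0 S)]
  /-- the relative 0-th Čech homology group `Ȟ₀(T, S)` -/
  H0rel : Set X → Set X → Type v
  [h0relAdd : ∀ T S : Set X, AddCommGroup (H0rel T S)]
  [h0relMod : ∀ T S : Set X, Module K (H0rel T S)]
  /-- the homomorphism induced by an inclusion of subspaces -/
  map : ∀ {S T : Set X}, S ⊆ T → (H0 S →ₗ[K] H0 T)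
  /-- the homomorphism induced by an inclusion of pairs -/
  maprel : ∀ {T S T' S' : Set X}, T ⊆ T' → S ⊆ S' → (H0rel T S →ₗ[K] H0rel T' S')
  /-- the natural map `Ȟ₀(T) → Ȟ₀(T, S)` -/
  quot : ∀ T S : Set X, H0 T →ₗ[K] H0rel T S
  map_comp : ∀ {S T U : Set X} (h₁ : S ⊆ T) (h₂ : T ⊆ U),
    (map h₂).comp (map h₁) = map (h₁.trans h₂)
  /-- the homology class of a point -/
  cls : ∀ S : Set X, S → H0 S
  map_cls : ∀ {S T : Set X} (h : S ⊆ T) (x : S), map h (cls S x) = cls T ⟨x.1, h x.2⟩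
  cls_eq_iff : ∀ S : Set X, IsCompact S → ∀ x y : S,
    (cls S x = cls S y ↔ connectedComponent x = connectedComponent y)
  cls_span : ∀ S : Set X, IsCompact S →
    Submodule.span K (Set.range (cls S)) = ⊤
  cls_indep : ∀ S : Set X, IsCompact S → ∀ f : ConnectedComponents ↥S → ↥S,
    (∀ c, ConnectedComponents.mk (f c) = c) →
    LinearIndependent K fun c => cls S (f c)
  quot_surjective : ∀ T S : Set X, S ⊆ T → Function.Surjective (quot T S)
  exact_pair : ∀ {S T : Set X} (h : S ⊆ T),
    LinearMap.range (map h) = LinearMap.ker (quot T S)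

attribute [instance] CechTheory.h0Add CechTheory.h0Mod CechTheory.h0relAdd
  CechTheory.h0relMod

/-- The size function of a size pair: `sizeFun φ u v` is the number of connected
components of the sublevel set `X_v = {φ ≤ v}` containing at least one point of
`X_u = {φ ≤ u}`. -/
noncomputable def sizeFun {X : Type u} [TopologicalSpace X] (φ : X → ℝ) (u v : ℝ) : ℕ :=
  Set.ncard {C : Set ↥{x : X | φ x ≤ v} |
    ∃ p : ↥{x : X | φ x ≤ v}, φ (p : X) ≤ u ∧ C = connectedComponent p}

/-- `w` is a homological 0-critical value for the size pair `(X, φ)`: for every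
sufficiently small `ε > 0`, the map `ι₀^{w-ε,w+ε} : Ȟ₀(X_{w-ε}) → Ȟ₀(X_{w+ε})` induced by
inclusion is not an isomorphism. -/
def CechTheory.IsHomCritical {X : Type u} [TopologicalSpace X] {K : Type v} [Field K]
    (C : CechTheory X K) (φ : X → ℝ) (w : ℝ) : Prop :=
  ∃ ε₀ > (0 : ℝ), ∀ ε : ℝ, ∀ hε : 0 < ε, ε < ε₀ →
    ¬ Function.Bijective (C.map (show {x : X | φ x ≤ w - ε} ⊆ {x : X | φ x ≤ w + ε} from
      fun x (hx : φ x ≤ w - ε) => show φ x ≤ w + ε from le_trans hx (by linarith)))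

/-! Since `ι₀^{w-ε,w+ε}` is onto but not bijective, it is not injective: two points `p`, `q`
of `X_{w-ε}` lie in different components of `X_{w-ε}` but in the same component of `X_{w+ε}`.
Let `m` be the infimum of the levels at which they are joined. By compactness they are
already joined in `X_m`, so `ι₀^{m-δ,m+δ}` is not injective for small `δ` and `m` is critical.
Choosing `ε` so small that `w` is the only critical value in `[w-ε, w+ε]` forces `m = w`;
then for `u = w - ε` the number `ℓ(u, v)` drops by at least one as `v` increases to `w`. -/

open Set Filter Topology

section Components

variable {X : Type*} [TopologicalSpace X]

theorem mem_connectedComponentIn_iff {F : Set X} {x y : X} (hx : x ∈ F) (hy : y ∈ F) :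
    y ∈ connectedComponentIn F x ↔
      connectedComponent (⟨x, hx⟩ : F) = connectedComponent (⟨y, hy⟩ : F) := by
  rw [connectedComponentIn_eq_image hx, eq_comm, connectedComponent_eq_iff_mem]
  exact Subtype.val_injective.mem_set_image (a := ⟨y, hy⟩)

theorem IsCompact.connectedComponentIn {F : Set X} (hF : IsCompact F) {x : X} (hx : x ∈ F) :
    IsCompact (connectedComponentIn F x) := by
  have := isCompact_iff_compactSpace.mp hF
  rw [connectedComponentIn_eq_image hx]
  exact isClosed_connectedComponent.isCompact.image continuous_subtype_val

theorem IsPreconnected.iInter_of_directed [T2Space X] {ι : Type*} [Nonempty ι]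
    {K : ι → Set X} (hd : Directed (· ⊇ ·) K) (hK : ∀ i, IsCompact (K i))
    (hconn : ∀ i, IsPreconnected (K i)) : IsPreconnected (⋂ i, K i) := by
  have hS : IsCompact (⋂ i, K i) :=
    (hK (Classical.arbitrary ι)).of_isClosed_subset (isClosed_iInter fun i => (hK i).isClosed)
      (iInter_subset _ _)
  rw [isPreconnected_iff_subset_of_fully_disjoint_closed hS.isClosed]
  intro u v hu hv hcover huv
  obtain ⟨U, V, hU, hV, huU, hvV, hUV⟩ := SeparatedNhds.of_isCompact_isCompact
    (hS.inter_left hu) (hS.inter_left hv) (huv.mono inter_subset_left inter_subset_left)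
  have hSUV : ∀ x ∈ ⋂ i, K i, x ∈ U ∪ V := fun x hx =>
    (hcover hx).imp (fun h => huU ⟨h, hx⟩) (fun h => hvV ⟨h, hx⟩)
  -- by compactness a single member of the family already lies in the open set `U ∪ V`
  obtain ⟨i, hi⟩ := exists_subset_nhds_of_isCompact hd hK
    fun x hx => (hU.union hV).mem_nhds (hSUV x hx)
  have hSi : ⋂ i, K i ⊆ K i := iInter_subset _ _
  rcases (hconn i).subset_or_subset hU hV hUV hi with hiU | hiV
  · refine Or.inl fun x hx => (hcover hx).resolve_right fun hxv => ?_
    exact disjoint_left.mp hUV (hiU (hSi hx)) (hvV ⟨hxv, hx⟩)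
  · refine Or.inr fun x hx => (hcover hx).resolve_left fun hxu => ?_
    exact disjoint_left.mp hUV (huU ⟨hxu, hx⟩) (hiV (hSi hx))

def componentsMeeting {S T : Set X} (h : S ⊆ T) : Set (ConnectedComponents T) :=
  range (ConnectedComponents.mk ∘ inclusion h)

theorem componentsMeeting_trans {S T U : Set X} (hST : S ⊆ T) (hTU : T ⊆ U) :
    componentsMeeting (hST.trans hTU) =
      (continuous_inclusion hTU).connectedComponentsMap '' componentsMeeting hST := by
  rw [componentsMeeting, componentsMeeting, ← range_comp]
  rfl

theorem componentsMeeting_finite [LocallyConnectedSpace X] {S U T : Set X} (hS : IsCompact S)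
    (hU : IsOpen U) (hSU : S ⊆ U) (hUT : U ⊆ T) :
    (componentsMeeting (hSU.trans hUT)).Finite := by
  have := hU.locallyConnectedSpace
  have := isCompact_iff_compactSpace.mp hS
  rw [componentsMeeting_trans hSU hUT]
  exact (isCompact_range (ConnectedComponents.continuous_coe.comp
    (continuous_inclusion hSU))).finite_of_discrete.image _

end Components

section Sublevel

theorem sublevel_subset_sublevel {X : Type*} {φ : X → ℝ} {v v' : ℝ} (h : v ≤ v') :
    {x | φ x ≤ v} ⊆ {x | φ x ≤ v'} :=
  fun _ hx => le_trans hx h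

variable {X : Type*} [TopologicalSpace X] {φ : X → ℝ}

theorem Continuous.isCompact_sublevel [CompactSpace X] (hφ : Continuous φ) (v : ℝ) :
    IsCompact {x | φ x ≤ v} :=
  (isClosed_le hφ continuous_const).isCompact

theorem sizeFun_eq_ncard_componentsMeeting {u v : ℝ} (h : {x | φ x ≤ u} ⊆ {x | φ x ≤ v}) :
    sizeFun φ u v = (componentsMeeting h).ncard := by
  have hinj : Function.Injective fun c : ConnectedComponents {x | φ x ≤ v} =>
      ConnectedComponents.mk ⁻¹' {c} :=
    (preimage_injective.mpr ConnectedComponents.surjective_coe).comp singleton_injective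
  rw [sizeFun, ← ncard_image_of_injective _ hinj]
  congr 1
  ext C
  simp only [componentsMeeting, mem_ofPred_eq, ← range_comp, mem_range, Function.comp_apply,
    connectedComponents_preimage_singleton]
  constructor
  · rintro ⟨p, hp, rfl⟩
    exact ⟨⟨p, hp⟩, rfl⟩
  · rintro ⟨p, rfl⟩
    exact ⟨inclusion h p, p.2, rfl⟩

theorem sizeFun_lt_of_merge [CompactSpace X] [LocallyConnectedSpace X] (hφ : Continuous φ)
    {u v v' : ℝ} (huv : u < v) (hvv' : v ≤ v') {a b : X} (ha : φ a ≤ u) (hb : φ b ≤ u)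
    (hsep : b ∉ connectedComponentIn {x | φ x ≤ v} a)
    (hmerge : b ∈ connectedComponentIn {x | φ x ≤ v'} a) :
    sizeFun φ u v' < sizeFun φ u v := by
  have hu_lt : {x | φ x ≤ u} ⊆ {x | φ x < v} := fun _ hx => lt_of_le_of_lt hx huv
  have hlt_v : {x | φ x < v} ⊆ {x | φ x ≤ v} := fun x (hx : φ x < v) => hx.le
  have hfin := componentsMeeting_finite (hφ.isCompact_sublevel u)
    (isOpen_lt hφ continuous_const) hu_lt hlt_v
  have hvv'_sub := sublevel_subset_sublevel (φ := φ) hvv'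
  rw [sizeFun_eq_ncard_componentsMeeting ((hu_lt.trans hlt_v).trans hvv'_sub),
    componentsMeeting_trans _ hvv'_sub, sizeFun_eq_ncard_componentsMeeting (hu_lt.trans hlt_v)]
  refine (ncard_image_le hfin).lt_of_ne fun hcard => hsep ?_
  have hav : a ∈ {x | φ x ≤ v} := le_of_lt (lt_of_le_of_lt ha huv)
  have hbv : b ∈ {x | φ x ≤ v} := le_of_lt (lt_of_le_of_lt hb huv)
  rw [mem_connectedComponentIn_iff hav hbv, ← ConnectedComponents.coe_eq_coe]
  have hinj := injOn_of_ncard_image_eq hcard hfin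
  refine hinj (mem_range_self (⟨a, ha⟩ : {x | φ x ≤ u}))
    (mem_range_self (⟨b, hb⟩ : {x | φ x ≤ u})) ?_
  simp only [Function.comp_apply, Continuous.connectedComponentsMap_mk,
    ConnectedComponents.coe_eq_coe]
  exact (mem_connectedComponentIn_iff _ _).mp hmerge

theorem mem_connectedComponentIn_sublevel_of_forall_gt [CompactSpace X] [T2Space X]
    (hφ : Continuous φ) {a b : X} {m : ℝ} (ha : φ a ≤ m)
    (h : ∀ v > m, b ∈ connectedComponentIn {x | φ x ≤ v} a) :
    b ∈ connectedComponentIn {x | φ x ≤ m} a := by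
  let K : Ioi m → Set X := fun v => connectedComponentIn {x | φ x ≤ v.1} a
  have hmem : ∀ v : Ioi m, a ∈ {x | φ x ≤ v.1} := fun v => le_of_lt (lt_of_le_of_lt ha v.2)
  have hd : Directed (· ⊇ ·) K := fun v v' =>
    ⟨⟨min v.1 v'.1, lt_min (a := m) v.2 v'.2⟩,
      connectedComponentIn_mono a (sublevel_subset_sublevel (min_le_left _ _)),
      connectedComponentIn_mono a (sublevel_subset_sublevel (min_le_right _ _))⟩
  have := nonempty_Ioi_subtype (a := m)
  have hpre : IsPreconnected (⋂ v, K v) := IsPreconnected.iInter_of_directed hd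
    (fun v => (hφ.isCompact_sublevel v.1).connectedComponentIn (hmem v))
    (fun _ => isPreconnected_connectedComponentIn)
  have hsub : ⋂ v, K v ⊆ {x | φ x ≤ m} := fun x hx =>
    show φ x ≤ m from le_of_forall_gt_imp_ge_of_dense fun v hv =>
      connectedComponentIn_subset _ a (mem_iInter.mp hx ⟨v, hv⟩)
  exact hpre.subset_connectedComponentIn
    (mem_iInter.mpr fun v => mem_connectedComponentIn (hmem v)) hsub
    (mem_iInter.mpr fun v => h v.1 v.2)

theorem exists_merge_level [CompactSpace X] [T2Space X] (hφ : Continuous φ) {p q : X} {a b : ℝ}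
    (hp : φ p ≤ a) (hsep : q ∉ connectedComponentIn {x | φ x ≤ a} p)
    (hmerge : q ∈ connectedComponentIn {x | φ x ≤ b} p) :
    ∃ m ∈ Ioc a b, q ∈ connectedComponentIn {x | φ x ≤ m} p ∧
      ∀ v < m, q ∉ connectedComponentIn {x | φ x ≤ v} p := by
  set L := {v | q ∈ connectedComponentIn {x | φ x ≤ v} p}
  have hmono : ∀ {v v'}, v ≤ v' → v ∈ L → v' ∈ L := fun hvv' hv =>
    connectedComponentIn_mono p (sublevel_subset_sublevel hvv') hv
  have hlower : ∀ v ∈ L, a < v := fun v hv => not_le.mp fun hva => hsep (hmono hva hv)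
  have hbdd : BddBelow L := ⟨a, fun v hv => (hlower v hv).le⟩
  have hL : L.Nonempty := ⟨b, hmerge⟩
  have hmL : sInf L ∈ L := by
    refine mem_connectedComponentIn_sublevel_of_forall_gt hφ
      (hp.trans (le_csInf hL fun v hv => (hlower v hv).le)) fun v hv => ?_
    obtain ⟨s, hs, hsv⟩ := exists_lt_of_csInf_lt hL hv
    exact hmono hsv.le hs
  exact ⟨sInf L, ⟨hlower _ hmL, csInf_le hbdd hmerge⟩, hmL,
    fun v hv hvL => (csInf_le hbdd hvL).not_gt hv⟩

end Sublevel

theorem Set.Finite.eventually_inter_Icc_subset {s : Set ℝ} (hs : s.Finite) (w : ℝ) :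
    ∀ᶠ ε in 𝓝[>] 0, s ∩ Icc (w - ε) (w + ε) ⊆ {w} := by
  obtain ⟨δ, hδ, hball⟩ := Metric.mem_nhds_iff.mp
    ((hs.sdiff (t := {w})).isClosed.isOpen_compl.mem_nhds (x := w) fun h => h.2 rfl)
  filter_upwards [Ioo_mem_nhdsGT hδ] with ε hε v ⟨hv, hvI⟩
  by_contra hvw
  refine hball ?_ ⟨hv, hvw⟩
  rw [Metric.mem_ball, Real.dist_eq, abs_lt]
  constructor <;> linarith [hvI.1, hvI.2, hε.2]

theorem not_continuousAt_of_eventually_ge {α : Type*} [TopologicalSpace α] {f : α → ℝ}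
    {w : α} {l : Filter α} [l.NeBot] (hl : l ≤ 𝓝 w) {c : ℝ} (hc : f w < c)
    (h : ∀ᶠ v in l, c ≤ f v) : ¬ ContinuousAt f w :=
  fun hf => hc.not_ge (ge_of_tendsto (hf.tendsto.mono_left hl) h)

namespace CechTheory

variable {X : Type u} [TopologicalSpace X] {K : Type v} [Field K] (C : CechTheory X K)

theorem cls_eq_cls_iff {S : Set X} (hS : IsCompact S) {x y : X} (hx : x ∈ S) (hy : y ∈ S) :
    C.cls S ⟨x, hx⟩ = C.cls S ⟨y, hy⟩ ↔ y ∈ connectedComponentIn S x := by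
  rw [C.cls_eq_iff S hS, mem_connectedComponentIn_iff hx hy]

theorem cls_eq_cls_of_mk_eq {S : Set X} (hS : IsCompact S) {x y : S}
    (h : ConnectedComponents.mk x = ConnectedComponents.mk y) : C.cls S x = C.cls S y :=
  (C.cls_eq_iff S hS x y).mpr (ConnectedComponents.coe_eq_coe.mp h)

theorem linearIndependent_cls {S : Set X} (hS : IsCompact S) {ι : Type*} {g : ι → S}
    (hg : Function.Injective (ConnectedComponents.mk ∘ g)) :
    LinearIndependent K (C.cls S ∘ g) := by
  obtain ⟨rep, hrep⟩ := (ConnectedComponents.surjective_coe (α := S)).hasRightInverse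
  convert (C.cls_indep S hS rep hrep).comp _ hg using 1
  funext i
  exact C.cls_eq_cls_of_mk_eq hS (hrep _).symm

theorem span_cls_comp {S : Set X} (hS : IsCompact S) {ι : Type*} {g : ι → S}
    (hg : Function.Surjective (ConnectedComponents.mk ∘ g)) :
    Submodule.span K (range (C.cls S ∘ g)) = ⊤ := by
  refine eq_top_iff.mpr ((C.cls_span S hS).ge.trans (Submodule.span_mono ?_))
  rintro _ ⟨x, rfl⟩
  obtain ⟨i, hi⟩ := hg (ConnectedComponents.mk x)
  exact ⟨i, C.cls_eq_cls_of_mk_eq hS hi⟩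

theorem map_injective_iff {S T : Set X} (hS : IsCompact S) (hT : IsCompact T) (h : S ⊆ T) :
    Function.Injective (C.map h) ↔
      ∀ x ∈ S, ∀ y ∈ S,
        y ∈ connectedComponentIn T x → y ∈ connectedComponentIn S x := by
  constructor
  · intro hinj x hx y hy hxy
    rw [← C.cls_eq_cls_iff hS hx hy]
    apply hinj
    rw [C.map_cls, C.map_cls]
    exact (C.cls_eq_cls_iff hT (h hx) (h hy)).mpr hxy
  · intro hsep
    obtain ⟨rep, hrep⟩ := (ConnectedComponents.surjective_coe (α := S)).hasRightInverse
    refine LinearMap.injective_of_linearIndependent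
      (C.span_cls_comp hS (g := rep) fun c => ⟨c, hrep c⟩) ?_
    have hmap : C.map h ∘ C.cls S ∘ rep = C.cls T ∘ inclusion h ∘ rep :=
      funext fun c => C.map_cls h (rep c)
    rw [hmap]
    refine C.linearIndependent_cls hT fun c c' hcc' => ?_
    rw [← hrep c, ← hrep c', ConnectedComponents.coe_eq_coe,
      ← mem_connectedComponentIn_iff]
    exact hsep _ (rep c).2 _ (rep c').2 <|
      (mem_connectedComponentIn_iff (h (rep c).2) (h (rep c').2)).mpr
        (ConnectedComponents.coe_eq_coe.mp hcc')

theorem isHomCritical_of_merge [CompactSpace X] {φ : X → ℝ} (hφ : Continuous φ) {p q : X}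
    {a m : ℝ} (ham : a < m) (hp : φ p ≤ a) (hq : φ q ≤ a)
    (hsep : ∀ v < m, q ∉ connectedComponentIn {x | φ x ≤ v} p)
    (hmerge : q ∈ connectedComponentIn {x | φ x ≤ m} p) :
    C.IsHomCritical φ m := by
  refine ⟨m - a, sub_pos.mpr ham, fun δ hδ hδa hbij => hsep (m - δ) (by linarith) ?_⟩
  refine (C.map_injective_iff (hφ.isCompact_sublevel _) (hφ.isCompact_sublevel _) _).mp hbij.1
    p (show φ p ≤ m - δ by linarith) q (show φ q ≤ m - δ by linarith) ?_
  exact connectedComponentIn_mono p (sublevel_subset_sublevel (by linarith)) hmerge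

theorem IsHomCritical.eventually_not_bijective {C : CechTheory X K} {φ : X → ℝ} {w : ℝ}
    (hw : C.IsHomCritical φ w) :
    ∀ᶠ ε in 𝓝[>] 0, ∀ h : {x | φ x ≤ w - ε} ⊆ {x | φ x ≤ w + ε},
      ¬ Function.Bijective (C.map h) := by
  obtain ⟨ε₀, hε₀, hw⟩ := hw
  exact (nhdsGT_basis 0).eventually_iff.mpr ⟨ε₀, hε₀, fun ε hε _ => hw ε hε.1 hε.2⟩

end CechTheory

/-- Proposition 3.11 (ii): let `(X, φ)` be a size pair with at most
finitely many homological 0-critical values, and let `w` be a homological 0-critical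
value. If the inclusion-induced map `ι₀^{w−ε,w+ε} : Ȟ₀(X_{w−ε}) → Ȟ₀(X_{w+ε})` is
surjective for every sufficiently small `ε > 0`, then there exists `u < w` such that `w`
is a discontinuity point of `v ↦ ℓ_{(X,φ)}(u, v)`. -/
theorem exists_discontinuity_second_var {X : Type u} [TopologicalSpace X] [CompactSpace X]
    [T2Space X] [LocallyConnectedSpace X] {K : Type v} [Field K]
    (C : CechTheory X K) {φ : X → ℝ} (hφ : Continuous φ)
    (hfin : {w : ℝ | C.IsHomCritical φ w}.Finite)
    {w : ℝ} (hw : C.IsHomCritical φ w)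
    (hsurj : ∃ ε₀ > (0 : ℝ), ∀ ε : ℝ, ∀ hε : 0 < ε, ε < ε₀ →
      Function.Surjective (C.map (show {x : X | φ x ≤ w - ε} ⊆ {x : X | φ x ≤ w + ε} from
        fun x (hx : φ x ≤ w - ε) => show φ x ≤ w + ε from le_trans hx (by linarith)))) :
    ∃ u < w, ¬ ContinuousAt (fun v : ℝ => (sizeFun φ u v : ℝ)) w := by
  obtain ⟨ε₀, hε₀, hsurj⟩ := hsurj
  have hsurj' : ∀ᶠ ε in 𝓝[>] 0, ∀ h : {x | φ x ≤ w - ε} ⊆ {x | φ x ≤ w + ε},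
      Function.Surjective (C.map h) :=
    (nhdsGT_basis 0).eventually_iff.mpr ⟨ε₀, hε₀, fun ε hε _ => hsurj ε hε.1 hε.2⟩
  obtain ⟨ε, ⟨⟨hnbij, hsurj⟩, hisol⟩, hε⟩ :=
    (((hw.eventually_not_bijective.and hsurj').and (hfin.eventually_inter_Icc_subset w)).and
      self_mem_nhdsWithin).exists
  have hsub := sublevel_subset_sublevel (φ := φ) (show w - ε ≤ w + ε by linarith)
  have hnotinj := mt (C.map_injective_iff (hφ.isCompact_sublevel _) (hφ.isCompact_sublevel _)
    hsub).mpr fun hinj => hnbij hsub ⟨hinj, hsurj hsub⟩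
  push Not at hnotinj
  obtain ⟨p, hp, q, hq, hmerge, hsep⟩ := hnotinj
  obtain ⟨m, hm, hqm, hsepm⟩ := exists_merge_level hφ hp hsep hmerge
  obtain rfl : m = w := hisol ⟨C.isHomCritical_of_merge hφ hm.1 hp hq hsepm hqm, hm.1.le, hm.2⟩
  refine ⟨m - ε, by linarith [hm.1],
    not_continuousAt_of_eventually_ge (l := 𝓝[<] m) nhdsWithin_le_nhds (lt_add_one _) ?_⟩
  filter_upwards [Ioo_mem_nhdsLT hm.1] with v hv
  exact_mod_cast sizeFun_lt_of_merge hφ hv.1 hv.2.le hp hq (hsepm v hv.2) hqm
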